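/- There is an absolute constant C > 0 such that the following holds for all sufficiently large integers N. Set Y := N/(2·log N) and w(n) := (n/Y)^{-1/2} · e^{-n/Y} for positive integers n. Then for all real σ, γ with 0 ≤ σ ≤ 1/4 and |γ| ≤ N^{1/4}, for ρ := 1 - σ + iγ, and for all η ∈ ℝ with ‖η‖ > N^{-1/2}: |Σ_{n=1}^{N} n^{ρ-1} · w(n) · e(ηn)| ≤ C · N^{1 - 1/12}. -/

import Mathlib

/-!
Writing `c = ρ - 3/2`, the summand is `√Y · n^c e^{-n/Y} e(ηn)` with `Re c ≤ -1/2`. Split the sum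
at `M ≈ N^{3/4}`. The terms `n ≤ M` are bounded trivially by `√Y ∑ n^{-1/2} ≪ √(NM)`. For `n > M`,
partial summation against the geometric sums `∑ e(ηn)`, which are at most `1/(2‖η‖) < √N/2`,
leaves the total variation of `t^c e^{-t/Y}` on `[M, N]`, which is `≪ (1 + |γ|)/√M + √N/Y`.
Since `|γ| ≤ N^{1/4}` and `Y ≥ N^{1/4}`, every contribution is `O(N^{7/8})`.
-/

noncomputable def e (θ : ℝ) : ℂ := Complex.exp (2 * Real.pi * Complex.I * θ)

open Finset Real

lemma norm_e (θ : ℝ) : ‖e θ‖ = 1 := by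
  rw [e, Complex.norm_exp]
  simp

lemma e_add (a b : ℝ) : e (a + b) = e a * e b := by
  rw [e, e, e, ← Complex.exp_add]
  push_cast
  ring_nf

lemma e_intCast (k : ℤ) : e k = 1 := by
  rw [e, ← Complex.exp_int_mul_two_pi_mul_I k]
  push_cast
  ring_nf

lemma e_mul_natCast (η : ℝ) (j : ℕ) : e (η * j) = e η ^ j := by
  rw [e, e, ← Complex.exp_nat_mul]
  push_cast
  ring_nf

lemma four_mul_abs_sub_round_le_norm_e_sub_one (η : ℝ) :
    4 * |η - round η| ≤ ‖e η - 1‖ := by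
  set θ := η - round η
  have hθ : |θ| ≤ 1 / 2 := abs_sub_round η
  have he : e η = Complex.exp (Complex.I * ↑(2 * π * θ)) := by
    rw [show η = θ + (round η : ℤ) by ring, e_add, e_intCast, mul_one, e]
    push_cast
    ring_nf
  have hsin : 2 / π * |π * θ| ≤ |Real.sin (π * θ)| :=
    mul_abs_le_abs_sin (by rw [abs_mul, abs_of_pos pi_pos]; nlinarith [pi_pos])
  rw [he, Complex.norm_exp_I_mul_ofReal_sub_one, Real.norm_eq_abs, abs_mul, abs_two,
    show 2 * π * θ / 2 = π * θ by ring]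
  rw [abs_mul, abs_of_pos pi_pos, ← mul_assoc, div_mul_cancel₀ _ pi_pos.ne'] at hsin
  linarith

lemma norm_sum_range_e_mul_le {η : ℝ} (hη : 0 < |η - round η|) (k : ℕ) :
    ‖∑ j ∈ range k, e (η * j)‖ ≤ (2 * |η - round η|)⁻¹ := by
  have hgap := four_mul_abs_sub_round_le_norm_e_sub_one η
  have hne : e η ≠ 1 := fun h => by simp [h] at hgap; linarith
  simp only [e_mul_natCast]
  rw [geom_sum_eq hne, norm_div]
  have hnum : ‖e η ^ k - 1‖ ≤ 2 := by
    have := norm_sub_le (e η ^ k) 1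
    rw [norm_pow, norm_e, one_pow, norm_one] at this
    linarith
  rw [div_le_iff₀ (by linarith), inv_mul_eq_div, le_div_iff₀ (by linarith)]
  nlinarith

lemma norm_sum_Ioc_smul_le {R E : Type*} [NormedRing R] [NormedAddCommGroup E] [Module R E]
    [IsBoundedSMul R E] (f : ℕ → R) (g : ℕ → E) {B : ℝ}
    (hB : ∀ k, ‖∑ i ∈ range k, g i‖ ≤ B) (m n : ℕ) :
    ‖∑ i ∈ Ioc m n, f i • g i‖ ≤
      B * (‖f n‖ + ‖f (m + 1)‖ + ∑ i ∈ Ioc m (n - 1), ‖f (i + 1) - f i‖) := by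
  have hB0 : 0 ≤ B := by simpa using hB 0
  rcases le_or_gt n m with hnm | hmn
  · rw [Ioc_eq_empty_of_le hnm, sum_empty, norm_zero]
    positivity
  rw [sum_Ioc_by_parts f g hmn]
  have hterm : ∀ (r : R) k, ‖r • ∑ i ∈ range k, g i‖ ≤ ‖r‖ * B := fun r k =>
    (norm_smul_le _ _).trans (mul_le_mul_of_nonneg_left (hB k) (norm_nonneg r))
  have hsum : ‖∑ i ∈ Ioc m (n - 1), (f (i + 1) - f i) • ∑ j ∈ range (i + 1), g j‖ ≤
      ∑ i ∈ Ioc m (n - 1), ‖f (i + 1) - f i‖ * B :=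
    (norm_sum_le _ _).trans (sum_le_sum fun i _ => hterm _ _)
  rw [← sum_mul] at hsum
  linarith [norm_sub_le (f n • ∑ i ∈ range (n + 1), g i - f (m + 1) • ∑ i ∈ range (m + 1), g i)
      (∑ i ∈ Ioc m (n - 1), (f (i + 1) - f i) • ∑ j ∈ range (i + 1), g j),
    norm_sub_le (f n • ∑ i ∈ range (n + 1), g i) (f (m + 1) • ∑ i ∈ range (m + 1), g i),
    hterm (f n) (n + 1), hterm (f (m + 1)) (m + 1)]

lemma sum_Ioc_le_sub_of_le_sub {f F : ℕ → ℝ} {m : ℕ}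
    (h : ∀ n, m ≤ n → f (n + 1) ≤ F (n + 1) - F n) {N : ℕ} (hmN : m ≤ N) :
    ∑ n ∈ Ioc m N, f n ≤ F N - F m := by
  induction N, hmN using Nat.le_induction with
  | base => simp
  | succ k hk ih =>
    rw [sum_Ioc_succ_top hk]
    linarith [h k hk]

lemma inv_sqrt_add_one_le {x : ℝ} (hx : 0 ≤ x) : (√(x + 1))⁻¹ ≤ 2 * √(x + 1) - 2 * √x := by
  have hb : 0 < √(x + 1) := Real.sqrt_pos.2 (by linarith)
  have hab : √x ≤ √(x + 1) := Real.sqrt_le_sqrt (by linarith)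
  have hsq : √(x + 1) ^ 2 - √x ^ 2 = 1 := by
    rw [Real.sq_sqrt (by linarith), Real.sq_sqrt hx]; ring
  rw [inv_le_iff_one_le_mul₀' hb]
  nlinarith

lemma inv_mul_sqrt_add_one_le {x : ℝ} (hx : 0 < x) :
    ((x + 1) * √(x + 1))⁻¹ ≤ 2 / √x - 2 / √(x + 1) := by
  have ha : 0 < √x := Real.sqrt_pos.2 hx
  have hb : 0 < √(x + 1) := Real.sqrt_pos.2 (by linarith)
  have hab : √x ≤ √(x + 1) := Real.sqrt_le_sqrt (by linarith)
  have hsq : √(x + 1) ^ 2 - √x ^ 2 = 1 := by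
    rw [Real.sq_sqrt (by linarith), Real.sq_sqrt hx.le]; ring
  have hx1 : x + 1 = √(x + 1) ^ 2 := (Real.sq_sqrt (by linarith)).symm
  set a := √x
  set b := √(x + 1)
  rw [hx1, div_sub_div _ _ ha.ne' hb.ne', inv_eq_one_div, div_le_div_iff₀ (by positivity)
    (by positivity)]
  nlinarith [mul_nonneg (mul_nonneg (sq_nonneg b) (sub_nonneg.2 hab)) (sub_nonneg.2 hab),
    mul_nonneg hb.le (sub_nonneg.2 hab)]

lemma sum_Icc_inv_sqrt_le (N : ℕ) : ∑ n ∈ Icc 1 N, (√n)⁻¹ ≤ 2 * √N := by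
  have := sum_Ioc_le_sub_of_le_sub (f := fun n : ℕ => (√n)⁻¹) (F := fun n : ℕ => 2 * √n)
    (fun n _ => by push_cast; exact inv_sqrt_add_one_le n.cast_nonneg) (Nat.zero_le N)
  simpa [← Icc_add_one_left_eq_Ioc] using this

lemma sum_Ioc_inv_mul_sqrt_le {M : ℕ} (hM : 0 < M) (N : ℕ) :
    ∑ n ∈ Ioc M N, ((n : ℝ) * √n)⁻¹ ≤ 2 / √M := by
  rcases le_or_gt M N with hMN | hNM
  · have := sum_Ioc_le_sub_of_le_sub (f := fun n : ℕ => ((n : ℝ) * √n)⁻¹)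
      (F := fun n : ℕ => -2 / √n) (fun n hn => by
        push_cast
        rw [neg_div, neg_div, sub_neg_eq_add, neg_add_eq_sub]
        exact inv_mul_sqrt_add_one_le (by exact_mod_cast hM.trans_le hn)) hMN
    have : 0 ≤ 2 / √N := by positivity
    simp only [neg_div] at *
    linarith
  · rw [Ioc_eq_empty_of_le hNM.le, sum_empty]; positivity

/-- `t ^ c * exp (-t / Y)` for `t > 0`, written through `Real.log` so that it is differentiable
there. -/
noncomputable def dampedPow (c : ℂ) (Y t : ℝ) : ℂ :=
  Complex.exp (c * Real.log t - (t / Y : ℝ))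

lemma norm_dampedPow (c : ℂ) (Y t : ℝ) :
    ‖dampedPow c Y t‖ = Real.exp (c.re * Real.log t - t / Y) := by
  rw [dampedPow, Complex.norm_exp]
  simp

lemma norm_dampedPow_le {c : ℂ} (hc : c.re ≤ -1 / 2) {Y : ℝ} (hY : 0 ≤ Y) {t : ℝ} (ht : 1 ≤ t) :
    ‖dampedPow c Y t‖ ≤ (√t)⁻¹ := by
  have ht0 : 0 < t := by linarith
  have hlog := Real.log_nonneg ht
  have htY : 0 ≤ t / Y := by positivity
  rw [norm_dampedPow, Real.sqrt_eq_rpow, ← Real.rpow_neg ht0.le, Real.rpow_def_of_pos ht0]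
  gcongr
  nlinarith

lemma hasDerivAt_dampedPow (c : ℂ) (Y : ℝ) {t : ℝ} (ht : 0 < t) :
    HasDerivAt (dampedPow c Y) ((c * (t : ℂ)⁻¹ - (Y : ℂ)⁻¹) * dampedPow c Y t) t := by
  have hlog := ((Real.hasDerivAt_log ht.ne').ofReal_comp).const_mul c
  have hlin := ((hasDerivAt_id t).div_const Y).ofReal_comp
  convert (hlog.sub hlin).cexp using 1
  · rfl
  · simp only [dampedPow, Pi.sub_apply, id]
    push_cast
    ring

lemma norm_dampedPow_add_one_sub_le {c : ℂ} (hc : c.re ≤ -1 / 2) {Y : ℝ} (hY : 0 ≤ Y)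
    {t : ℝ} (ht : 1 ≤ t) :
    ‖dampedPow c Y (t + 1) - dampedPow c Y t‖ ≤ (‖c‖ / t + Y⁻¹) * (√t)⁻¹ := by
  have hderiv : ∀ x ∈ Set.Icc t (t + 1),
      ‖(c * (x : ℂ)⁻¹ - (Y : ℂ)⁻¹) * dampedPow c Y x‖ ≤ (‖c‖ / t + Y⁻¹) * (√t)⁻¹ := by
    rintro x ⟨htx, -⟩
    have hx0 : 0 < x := by linarith
    rw [norm_mul]
    gcongr
    · calc ‖c * (x : ℂ)⁻¹ - (Y : ℂ)⁻¹‖ ≤ ‖c‖ / x + Y⁻¹ := by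
            refine (norm_sub_le _ _).trans_eq ?_
            rw [norm_mul, norm_inv, norm_inv, Complex.norm_real, Complex.norm_real,
              Real.norm_of_nonneg hx0.le, Real.norm_of_nonneg hY, div_eq_mul_inv]
        _ ≤ ‖c‖ / t + Y⁻¹ := by gcongr
    · exact (norm_dampedPow_le hc hY (ht.trans htx)).trans (by gcongr)
  have := (convex_Icc t (t + 1)).norm_image_sub_le_of_norm_hasDerivWithin_le
    (fun x hx => (hasDerivAt_dampedPow c Y (by linarith [hx.1])).hasDerivWithinAt) hderiv
    (Set.left_mem_Icc.2 (by linarith)) (Set.right_mem_Icc.2 (by linarith))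
  simpa using this

lemma norm_sum_dampedPow_mul_e_le {c : ℂ} (hc : c.re ≤ -1 / 2) {Y : ℝ} (hY : 0 ≤ Y) {η : ℝ}
    (hη : 0 < |η - round η|) {M N : ℕ} (hM : 0 < M) (hMN : M ≤ N) :
    ‖∑ n ∈ Icc 1 N, dampedPow c Y n * e (η * n)‖ ≤
      2 * √M + ((1 + ‖c‖) / √M + √N / Y) / |η - round η| := by
  have hg : ∀ n : ℕ, 0 < n → ‖dampedPow c Y n‖ ≤ (√n)⁻¹ := fun n hn =>
    norm_dampedPow_le hc hY (by exact_mod_cast hn)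
  have hgM : ∀ n : ℕ, M ≤ n → ‖dampedPow c Y n‖ ≤ (√M)⁻¹ := fun n hn =>
    (hg n (hM.trans_le hn)).trans (by gcongr)
  have hhead : ‖∑ n ∈ Ioc 0 M, dampedPow c Y n * e (η * n)‖ ≤ 2 * √M :=
    calc _ ≤ ∑ n ∈ Ioc 0 M, ‖dampedPow c Y n * e (η * n)‖ := norm_sum_le _ _
      _ ≤ ∑ n ∈ Icc 1 M, (√n)⁻¹ := by
          refine sum_le_sum fun n hn => ?_
          rw [norm_mul, norm_e, mul_one]
          exact hg n (mem_Ioc.1 hn).1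
      _ ≤ 2 * √M := sum_Icc_inv_sqrt_le M
  have hvar : ∑ n ∈ Ioc M (N - 1), ‖dampedPow c Y (n + 1 : ℕ) - dampedPow c Y n‖ ≤
      ‖c‖ * (2 / √M) + Y⁻¹ * (2 * √N) :=
    calc _ ≤ ∑ n ∈ Ioc M (N - 1), (‖c‖ * ((n : ℝ) * √n)⁻¹ + Y⁻¹ * (√n)⁻¹) := by
          refine sum_le_sum fun n hn => ?_
          have hn : (1 : ℝ) ≤ n := by exact_mod_cast (hM.trans (mem_Ioc.1 hn).1)
          push_cast
          refine (norm_dampedPow_add_one_sub_le hc hY hn).trans_eq ?_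
          field_simp
      _ ≤ ∑ n ∈ Ioc M N, (‖c‖ * ((n : ℝ) * √n)⁻¹ + Y⁻¹ * (√n)⁻¹) :=
          sum_le_sum_of_subset_of_nonneg (Ioc_subset_Ioc_right (Nat.sub_le N 1))
            fun n _ _ => by positivity
      _ = ‖c‖ * ∑ n ∈ Ioc M N, ((n : ℝ) * √n)⁻¹ + Y⁻¹ * ∑ n ∈ Ioc M N, (√n)⁻¹ := by
          rw [sum_add_distrib, mul_sum, mul_sum]
      _ ≤ ‖c‖ * (2 / √M) + Y⁻¹ * (2 * √N) := by
          gcongr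
          · exact sum_Ioc_inv_mul_sqrt_le hM N
          · exact (sum_le_sum_of_subset_of_nonneg (Ioc_subset_Icc_self.trans
              (Icc_subset_Icc_left hM)) fun n _ _ => by positivity).trans (sum_Icc_inv_sqrt_le N)
  have htail := norm_sum_Ioc_smul_le (fun n : ℕ => dampedPow c Y n) (fun n : ℕ => e (η * n))
    (norm_sum_range_e_mul_le hη) M N
  simp only [smul_eq_mul] at htail
  rw [show Icc 1 N = Ioc 0 N from Icc_add_one_left_eq_Ioc 0 N,
    ← sum_Ioc_consecutive _ (Nat.zero_le M) hMN]
  refine (norm_add_le _ _).trans (add_le_add hhead (htail.trans ?_))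
  calc _ ≤ (2 * |η - round η|)⁻¹ * ((√M)⁻¹ + (√M)⁻¹ + (‖c‖ * (2 / √M) + Y⁻¹ * (2 * √N))) := by
        gcongr
        · exact hgM N hMN
        · exact hgM (M + 1) (Nat.le_succ M)
    _ = _ := by field_simp; ring

lemma natCast_cpow_mul_weight_eq_sqrt_mul_dampedPow {Y : ℝ} (hY : 0 < Y) (s : ℂ) {n : ℕ}
    (hn : n ≠ 0) :
    (n : ℂ) ^ s * ((((n : ℝ) / Y) ^ (-(1 : ℝ) / 2) * Real.exp (-((n : ℝ) / Y)) : ℝ) : ℂ) =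
      √Y * dampedPow (s - 1 / 2) Y n := by
  have hn0 : (0 : ℝ) < n := by exact_mod_cast Nat.pos_of_ne_zero hn
  rw [Complex.cpow_def_of_ne_zero (Nat.cast_ne_zero.2 hn), ← Complex.natCast_log,
    Real.rpow_def_of_pos (div_pos hn0 hY), Real.log_div hn0.ne' hY.ne', ← Real.exp_add,
    Real.sqrt_eq_rpow, Real.rpow_def_of_pos hY, dampedPow]
  push_cast
  rw [← Complex.exp_add, ← Complex.exp_add]
  ring_nf

lemma sq_le_div_two_log_pow_eight {x : ℝ} (hx : 2 ≤ x) :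
    x ^ 2 ≤ x ^ 8 / (2 * Real.log (x ^ 8)) := by
  have hlog : 0 < Real.log x := Real.log_pos (by linarith)
  have hlogx : Real.log x < x := (Real.log_le_sub_one_of_pos (by linarith)).trans_lt (by linarith)
  have hx5 : 32 ≤ x ^ 5 := by nlinarith [pow_le_pow_left₀ (by norm_num) hx 5]
  rw [Real.log_pow, le_div_iff₀ (by positivity)]
  push_cast
  nlinarith [pow_pos (by linarith : (0 : ℝ) < x) 3]

lemma div_two_log_pow_eight_le {x : ℝ} (hx : 2 ≤ x) : x ^ 8 / (2 * Real.log (x ^ 8)) ≤ x ^ 8 := by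
  have hlog : Real.log 2 ≤ Real.log x := Real.log_le_log (by norm_num) hx
  have h1 : 1 ≤ 2 * Real.log (x ^ 8) := by
    rw [Real.log_pow]; push_cast; linarith [Real.log_two_gt_d9]
  exact div_le_self (by positivity) h1

lemma sqrt_mul_norm_sum_dampedPow_mul_e_le {x : ℝ} (hx : 2 ≤ x) {N : ℕ} (hN : (N : ℝ) = x ^ 8)
    {Y : ℝ} (hxY : x ^ 2 ≤ Y) (hYN : Y ≤ x ^ 8) {c : ℂ} (hc_re : c.re ≤ -1 / 2)
    (hc : ‖c‖ ≤ 1 + x ^ 2) {η : ℝ} (hη : (x ^ 4)⁻¹ < |η - round η|) :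
    √Y * ‖∑ n ∈ Icc 1 N, dampedPow c Y n * e (η * n)‖ ≤ 7 * x ^ 7 := by
  have hx0 : 0 < x := by linarith
  -- `M ≈ N^{3/4}` balances the trivial bound `√(NM)` against the partial summation one `N^{5/4}/√M`.
  set M := ⌈x ^ 6⌉₊
  have hM6 : x ^ 6 ≤ M := Nat.le_ceil _
  have hM6' : (M : ℝ) ≤ 4 * x ^ 6 := by
    linarith [Nat.ceil_lt_add_one (by positivity : 0 ≤ x ^ 6),
      one_le_pow₀ (n := 6) (by linarith : 1 ≤ x)]
  have hM : 0 < M := Nat.ceil_pos.2 (by positivity)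
  have hMN : M ≤ N :=
    Nat.ceil_le.2 (by rw [hN]; exact pow_le_pow_right₀ (by linarith) (by norm_num))
  have hsM : x ^ 3 ≤ √M := (Real.le_sqrt' (by positivity)).2 (by rw [← pow_mul]; exact hM6)
  have hsM' : √M ≤ 2 * x ^ 3 := (Real.sqrt_le_left (by positivity)).2 (by linarith)
  have hsN : √N = x ^ 4 := by
    rw [hN, show x ^ 8 = (x ^ 4) ^ 2 by ring, Real.sqrt_sq (by positivity)]
  have hsY : x ≤ √Y := (Real.le_sqrt' hx0).2 hxY
  have hsY' : √Y ≤ x ^ 4 := (Real.sqrt_le_left (by positivity)).2 (by linarith)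
  have hY0 : 0 ≤ Y := (sq_nonneg x).trans hxY
  have hY : Y = √Y ^ 2 := (Real.sq_sqrt hY0).symm
  have hδ : |η - round η|⁻¹ ≤ x ^ 4 := by
    rw [inv_le_comm₀ (lt_trans (by positivity) hη) (by positivity)]; exact hη.le
  have hsum := norm_sum_dampedPow_mul_e_le hc_re hY0 (lt_trans (by positivity) hη) hM hMN
  rw [hsN, div_eq_mul_inv _ |η - round η|] at hsum
  set s := √Y
  set m := √M
  set d := |η - round η|⁻¹
  have hs : 0 < s := by linarith
  have h1 : s * m ≤ x ^ 4 * (2 * x ^ 3) := by gcongr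
  have h2 : s * ((1 + ‖c‖) / m) * d ≤ x ^ 4 * (2 * x ^ 2 / x ^ 3) * x ^ 4 := by
    gcongr
    nlinarith
  have h3 : s * (x ^ 4 / Y) * d ≤ x ^ 4 * x ^ 4 / x := by
    rw [hY, pow_two, ← div_div, mul_div_cancel₀ _ hs.ne', mul_comm, ← mul_div_assoc]
    gcongr
  calc s * ‖∑ n ∈ Icc 1 N, dampedPow c Y n * e (η * n)‖
      ≤ s * (2 * m + ((1 + ‖c‖) / m + x ^ 4 / Y) * d) := by gcongr
    _ = 2 * (s * m) + s * ((1 + ‖c‖) / m) * d + s * (x ^ 4 / Y) * d := by ring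
    _ ≤ 2 * (x ^ 4 * (2 * x ^ 3)) + x ^ 4 * (2 * x ^ 2 / x ^ 3) * x ^ 4 + x ^ 4 * x ^ 4 / x := by
        gcongr
    _ = 7 * x ^ 7 := by field_simp; ring

/-- Proposition 12.4: with `Y = N/(2 log N)` and `w(n) = (n/Y)^{-1/2} e^{-n/Y}`, for
`ρ = 1 - σ + iγ` with `0 ≤ σ ≤ 1/4`, `|γ| ≤ N^{1/4}`, and `‖η‖ > N^{-1/2}`, one has
`|∑_{n ≤ N} n^{ρ-1} w(n) e(ηn)| ≤ C·N^{1 - 1/12}`. -/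
theorem prop16_6 :
    ∃ C : ℝ, 0 < C ∧ ∃ N₀ : ℕ, ∀ N : ℕ, N₀ ≤ N →
      ∀ σ γ : ℝ, 0 ≤ σ → σ ≤ 1 / 4 → |γ| ≤ (N : ℝ) ^ ((1 : ℝ) / 4) →
      ∀ η : ℝ, (N : ℝ) ^ (-(1 : ℝ) / 2) < |η - (round η : ℝ)| →
        ‖∑ n ∈ Finset.Icc 1 N,
            (n : ℂ) ^ ((1 - (σ : ℂ) + (γ : ℂ) * Complex.I) - 1) *
              (((((n : ℝ) / ((N : ℝ) / (2 * Real.log N))) ^ (-(1 : ℝ) / 2) *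
                Real.exp (-((n : ℝ) / ((N : ℝ) / (2 * Real.log N))))) : ℝ) : ℂ) *
              e (η * n)‖ ≤
          C * (N : ℝ) ^ (1 - (1 : ℝ) / 12) := by
  refine ⟨7, by norm_num, 256, fun N hN σ γ hσ0 hσ1 hγ η hη => ?_⟩
  set x := (N : ℝ) ^ ((1 : ℝ) / 8)
  have hpow (k : ℕ) : (N : ℝ) ^ ((1 : ℝ) / 8 * k) = x ^ k :=
    Real.rpow_mul_natCast N.cast_nonneg _ k
  have hx8 : (N : ℝ) = x ^ 8 := by rw [← hpow 8]; norm_num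
  have hx : 2 ≤ x := (pow_le_pow_iff_left₀ (by norm_num) (by positivity) (by norm_num : 8 ≠ 0)).1
    (by rw [← hx8]; norm_num; exact_mod_cast hN)
  rw [show (N : ℝ) ^ ((1 : ℝ) / 4) = x ^ 2 by rw [← hpow 2]; norm_num] at hγ
  rw [show (N : ℝ) ^ (-(1 : ℝ) / 2) = (x ^ 4)⁻¹ by
    rw [← hpow 4, ← Real.rpow_neg N.cast_nonneg]; norm_num] at hη
  set Y := (N : ℝ) / (2 * Real.log N)
  have hxY : x ^ 2 ≤ Y := by simpa only [Y, hx8] using sq_le_div_two_log_pow_eight hx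
  have hYN : Y ≤ x ^ 8 := by simpa only [Y, hx8] using div_two_log_pow_eight_le hx
  set c := (1 - (σ : ℂ) + (γ : ℂ) * Complex.I) - 1 - 1 / 2
  have hc_re : c.re = -σ - 1 / 2 := by simp [c]
  have hc : ‖c‖ ≤ 1 + x ^ 2 := by
    refine (Complex.norm_le_abs_re_add_abs_im c).trans ?_
    rw [hc_re, abs_of_neg (by linarith), show c.im = γ by simp [c]]
    linarith
  have hterm : ∀ n ∈ Finset.Icc 1 N, (n : ℂ) ^ ((1 - (σ : ℂ) + (γ : ℂ) * Complex.I) - 1) *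
      ((((n : ℝ) / Y) ^ (-(1 : ℝ) / 2) * Real.exp (-((n : ℝ) / Y)) : ℝ) : ℂ) * e (η * n) =
      √Y * (dampedPow c Y n * e (η * n)) := fun n hn => by
    rw [natCast_cpow_mul_weight_eq_sqrt_mul_dampedPow ((sq_pos_of_pos (by linarith)).trans_le hxY) _
      (Nat.one_le_iff_ne_zero.1 (Finset.mem_Icc.1 hn).1), mul_assoc]
  rw [Finset.sum_congr rfl hterm, ← Finset.mul_sum, norm_mul, Complex.norm_real,
    Real.norm_of_nonneg (Real.sqrt_nonneg Y)]
  calc _ ≤ 7 * x ^ 7 :=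
        sqrt_mul_norm_sum_dampedPow_mul_e_le hx hx8 hxY hYN (by linarith) hc hη
    _ ≤ 7 * (N : ℝ) ^ (1 - (1 : ℝ) / 12) := by
        rw [← hpow 7]
        gcongr
        · exact_mod_cast (by omega : 1 ≤ N)
        · norm_num
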